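/- On the reference triangle with V = (0,0), W0 = (0,ℓ1) (so the shared edge lies on the y-axis), the sting function of V scaled to a triangle on each side satisfies: the jump of the tangential derivative along VW0 at V, weighted by ℓ1³, of e1·s_{V,K1} + e2·s_{V,K2} equals −6ℓ1² e1 + 6ℓ1² e2, where s_{V,Ki} denotes the sting function of V on triangle Ki; equivalently, the tangential derivative of the sting function s_{VK} at its own vertex V along an edge of K emanating from V of length ℓ equals ∓6/ℓ. -/

import Mathlib

noncomputable def stingProfile (t : ℝ) : ℝ :=
  28/5 * t^3 - 63/10 * t^2 + 9/5 * t - 1/10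

lemma sting_hasDerivAt (x : ℝ) :
    HasDerivAt stingProfile (28/5*(3*x^2) - 63/10*(2*x) + 9/5) x := by
  have h : HasDerivAt (fun t : ℝ => 28/5 * t^3 - 63/10 * t^2 + 9/5 * t - 1/10)
      (28/5*(3*x^2) - 63/10*(2*x) + 9/5) x := by
    have h3 : HasDerivAt (fun t : ℝ => t^3) (3*x^2) x := by
      simpa using hasDerivAt_pow 3 x
    have h2 : HasDerivAt (fun t : ℝ => t^2) (2*x) x := by
      simpa using hasDerivAt_pow 2 x
    have h1 : HasDerivAt (fun t : ℝ => t) 1 x := hasDerivAt_id x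
    simpa using (((h3.const_mul (28/5:ℝ)).sub (h2.const_mul (63/10:ℝ))).add
      (h1.const_mul (9/5:ℝ))).sub_const (1/10:ℝ)
  exact h

lemma key (V W0 : ℝ × ℝ) (hVW : V ≠ W0)
    (lam : (ℝ × ℝ) →ᵃ[ℝ] ℝ) (hV : lam V = 1) (hW : lam W0 = 0) :
    deriv (fun τ : ℝ => stingProfile (lam (V + τ • ((dist V W0)⁻¹ • (W0 - V))))) 0 =
      -6 / dist V W0 := by
  set d := dist V W0 with hd
  have hdpos : 0 < d := dist_pos.mpr hVW
  have hlin : lam.linear (W0 - V) = -1 := by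
    have := lam.linearMap_vsub W0 V
    simp only [vsub_eq_sub] at this
    rw [this, hW, hV]; ring
  have hval : ∀ τ : ℝ, lam (V + τ • ((d : ℝ)⁻¹ • (W0 - V))) = 1 + τ * (-d⁻¹) := by
    intro τ
    have : V + τ • ((d : ℝ)⁻¹ • (W0 - V)) = (τ • ((d : ℝ)⁻¹ • (W0 - V))) +ᵥ V := by
      simp [vadd_eq_add, add_comm]
    rw [this, lam.map_vadd, vadd_eq_add, hV]
    rw [lam.linear.map_smul, lam.linear.map_smul, hlin]
    simp [smul_eq_mul]; ring
  have hinner : HasDerivAt (fun τ : ℝ => 1 + τ * (-d⁻¹)) (-d⁻¹) 0 := by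
    simpa using ((hasDerivAt_id (0:ℝ)).mul_const (-d⁻¹)).const_add 1
  have hcomp := (sting_hasDerivAt ((1:ℝ) + 0 * (-d⁻¹))).comp 0 hinner
  have hfun : (fun τ : ℝ => stingProfile (lam (V + τ • ((d : ℝ)⁻¹ • (W0 - V)))))
      = fun τ : ℝ => stingProfile (1 + τ * (-d⁻¹)) := by
    funext τ; rw [hval]
  rw [hfun]
  have hcomp' : HasDerivAt (fun τ : ℝ => stingProfile (1 + τ * (-d⁻¹)))
      ((28 / 5 * (3 * (1 + 0 * -d⁻¹) ^ 2) - 63 / 10 * (2 * (1 + 0 * -d⁻¹)) + 9 / 5) * -d⁻¹) 0 := by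
    simpa [Function.comp_def] using hcomp
  rw [hcomp'.deriv]
  field_simp
  ring

/-- Tangential-derivative jump of sting functions at their own vertex: if λ₁, λ₂ are
    the barycentric coordinates of V in the two triangles K₁, K₂ sharing the edge VW₀
    (affine maps with λᵢ(V) = 1, λᵢ(W₀) = 0), so that the sting functions of V are the
    pullbacks s_{V,Kᵢ} = stingProfile ∘ λᵢ, then ℓ₁³ times the jump of the tangential
    derivative of e₁ s_{V,K₁} + e₂ s_{V,K₂} along VW₀ at V equals −6ℓ₁²e₁ + 6ℓ₁²e₂;
    equivalently the tangential derivative of a sting function at its own vertex along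
    an edge of length ℓ emanating from it is ∓6/ℓ (here −6/ℓ, so |·| = 6/ℓ). -/
theorem stmt17 (V W0 : ℝ × ℝ) (hVW : V ≠ W0)
    (lam1 lam2 : (ℝ × ℝ) →ᵃ[ℝ] ℝ)
    (h1V : lam1 V = 1) (h1W : lam1 W0 = 0)
    (h2V : lam2 V = 1) (h2W : lam2 W0 = 0)
    (e1 e2 : ℝ) :
    (dist V W0)^3 *
        (deriv (fun τ : ℝ => e1 * stingProfile (lam1 (V + τ • ((dist V W0)⁻¹ • (W0 - V))))) 0 -
         deriv (fun τ : ℝ => e2 * stingProfile (lam2 (V + τ • ((dist V W0)⁻¹ • (W0 - V))))) 0) =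
      -6 * (dist V W0)^2 * e1 + 6 * (dist V W0)^2 * e2 ∧
    deriv (fun τ : ℝ => stingProfile (lam1 (V + τ • ((dist V W0)⁻¹ • (W0 - V))))) 0 =
      -6 / dist V W0 ∧
    |deriv (fun τ : ℝ => stingProfile (lam1 (V + τ • ((dist V W0)⁻¹ • (W0 - V))))) 0| =
      6 / dist V W0 := by
  have hdpos : 0 < dist V W0 := dist_pos.mpr hVW
  have k1 := key V W0 hVW lam1 h1V h1W
  have k2 := key V W0 hVW lam2 h2V h2W
  have d1 : deriv (fun τ : ℝ => e1 * stingProfile (lam1 (V + τ • ((dist V W0)⁻¹ • (W0 - V))))) 0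
      = e1 * (-6 / dist V W0) := by
    rw [deriv_const_mul_field, k1]
  have d2 : deriv (fun τ : ℝ => e2 * stingProfile (lam2 (V + τ • ((dist V W0)⁻¹ • (W0 - V))))) 0
      = e2 * (-6 / dist V W0) := by
    rw [deriv_const_mul_field, k2]
  refine ⟨?_, k1, ?_⟩
  · rw [d1, d2]; field_simp; ring
  · rw [k1, abs_div, abs_neg]
    rw [abs_of_pos hdpos]
    norm_num
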